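/- arXiv:1702.01524 — 2 statements merged into one kernel-verified Lean document; each statement's English description precedes it below -/
import Mathlib

section
/- Assume every edge of G has finite level, i.e., L(e) < ∞ for all e ∈ E. Let P = v_0 v_1 ⋯ v_n be any taut path in G, with edges e_i = v_{i−1}v_i and levels ℓ_i = L(e_i). Then there exists an integer k with 0 ≤ k ≤ n such that ℓ_i < ℓ_{i+1} for all 1 ≤ i ≤ k−1 and ℓ_i > ℓ_{i+1} for all k+1 ≤ i ≤ n−1; that is, the level sequence consists of a strictly increasing prefix ℓ_1 < ℓ_2 < ⋯ < ℓ_k followed by a strictly decreasing suffix ℓ_{k+1} > ℓ_{k+2} > ⋯ > ℓ_n (with no constraint between ℓ_k and ℓ_{k+1}). -/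
/-!
An edge `e` of finite level cannot have, at both of its endpoints, a taut neighbour of level at
least `L e`: the fixed-point equation would then give `L e ≥ 1 + L e`. Along a taut path this says
that no interior edge is a weak local minimum of the level sequence, so as soon as the levels stop
strictly increasing they strictly decrease until the end of the path.
-/

open SimpleGraph

variable {V : Type*}

/-- The set of levels (under `L`) of taut neighbours of edge `e` at vertex `v`:
edges `f` of `G` incident to `v` such that the turn from `e` to `f` at `v` is taut. -/
def tautNbrLevels (G : SimpleGraph V) (taut : V → Sym2 V → Sym2 V → Prop)
    (L : Sym2 V → ℕ∞) (v : V) (e : Sym2 V) : Set ℕ∞ :=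
  {n | ∃ f ∈ G.edgeSet, v ∈ f ∧ taut v e f ∧ n = L f}

/-- The monotone operator on `E → ℕ∞` whose least fixed point defines edge levels:
`(levelOp L) e = 1 + min over the endpoints v of e of sup {L f : f taut neighbour of e at v}`
(with `sSup ∅ = 0`). -/
noncomputable def levelOp (G : SimpleGraph V) (taut : V → Sym2 V → Sym2 V → Prop)
    (L : Sym2 V → ℕ∞) (e : Sym2 V) : ℕ∞ :=
  1 + ⨅ v ∈ e, sSup (tautNbrLevels G taut L v e)

/-- `L` is the edge-level function: the pointwise least fixed point (on edges of `G`)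
of the level operator. -/
def IsEdgeLevel (G : SimpleGraph V) (taut : V → Sym2 V → Sym2 V → Prop)
    (L : Sym2 V → ℕ∞) : Prop :=
  (∀ e ∈ G.edgeSet, L e = levelOp G taut L e) ∧
  ∀ L' : Sym2 V → ℕ∞, (∀ e ∈ G.edgeSet, L' e = levelOp G taut L' e) →
    ∀ e ∈ G.edgeSet, L e ≤ L' e

/-- `p 0, p 1, …, p n` is a taut path in `G`: a walk of length `n ≥ 1` such that at every
interior vertex `p i` (`1 ≤ i ≤ n-1`), the turn from edge `p (i-1) p i` to edge
`p i p (i+1)` is taut. -/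
def IsTautPath (G : SimpleGraph V) (taut : V → Sym2 V → Sym2 V → Prop)
    (n : ℕ) (p : ℕ → V) : Prop :=
  1 ≤ n ∧ (∀ i < n, G.Adj (p i) (p (i + 1))) ∧
  ∀ i, 1 ≤ i → i < n → taut (p i) s(p (i - 1), p i) s(p i, p (i + 1))

section LevelSequence

variable {α : Type*}

theorem strictAnti_tail_of_le [Preorder α] {a : ℕ → α} {n k : ℕ}
    (h : ∀ i, 1 ≤ i → i + 2 ≤ n → a i < a (i + 1) ∨ a (i + 2) < a (i + 1))
    (hk : 1 ≤ k) (hle : a (k + 1) ≤ a k) :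
    ∀ i, k + 1 ≤ i → i + 1 ≤ n → a (i + 1) < a i := by
  intro i hi
  induction i, hi using Nat.le_induction with
  | base => exact fun hn => (h k hk hn).resolve_left (not_lt_of_ge hle)
  | succ i hi ih => exact fun hn => (h i (by omega) hn).resolve_left (ih (by omega)).asymm

theorem exists_strictMono_prefix_strictAnti_suffix [LinearOrder α] {a : ℕ → α} {n : ℕ}
    (h : ∀ i, 1 ≤ i → i + 2 ≤ n → a i < a (i + 1) ∨ a (i + 2) < a (i + 1)) :
    ∃ k, k ≤ n ∧
      (∀ i, 1 ≤ i → i + 1 ≤ k → a i < a (i + 1)) ∧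
      (∀ i, k + 1 ≤ i → i + 1 ≤ n → a (i + 1) < a i) := by
  classical
  by_cases hstop : ∃ k, 1 ≤ k ∧ k < n ∧ a (k + 1) ≤ a k
  · obtain ⟨hk, hkn, hle⟩ := Nat.find_spec hstop
    refine ⟨Nat.find hstop, hkn.le, fun i hi hik => ?_, strictAnti_tail_of_le h hk hle⟩
    by_contra hnot
    exact Nat.find_min hstop (m := i) (by omega) ⟨hi, by omega, not_lt.mp hnot⟩
  · push Not at hstop
    exact ⟨n, le_rfl, fun i hi hin => hstop i hi (by omega), fun i hi hin => by omega⟩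

end LevelSequence

section EdgeLevel

variable {G : SimpleGraph V} {taut : V → Sym2 V → Sym2 V → Prop} {L : Sym2 V → ℕ∞}

theorem le_sSup_tautNbrLevels {v : V} {e f : Sym2 V} (hf : f ∈ G.edgeSet) (hv : v ∈ f)
    (hvef : taut v e f) : L f ≤ sSup (tautNbrLevels G taut L v e) :=
  le_sSup ⟨f, hf, hv, hvef, rfl⟩

theorem lt_or_lt_of_eq_levelOp {u v : V} {f g : Sym2 V}
    (hfix : L s(u, v) = levelOp G taut L s(u, v)) (hfin : L s(u, v) ≠ ⊤)
    (hf : f ∈ G.edgeSet) (hu : u ∈ f) (huf : taut u s(u, v) f)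
    (hg : g ∈ G.edgeSet) (hv : v ∈ g) (hvg : taut v s(u, v) g) :
    L f < L s(u, v) ∨ L g < L s(u, v) := by
  by_contra! hge
  have hle : L s(u, v) ≤ ⨅ w ∈ s(u, v), sSup (tautNbrLevels G taut L w s(u, v)) := by
    refine le_iInf₂ fun w hw => ?_
    rcases Sym2.mem_iff.mp hw with rfl | rfl
    · exact hge.1.trans (le_sSup_tautNbrLevels hf hu huf)
    · exact hge.2.trans (le_sSup_tautNbrLevels hg hv hvg)
  have hsucc_le : L s(u, v) + 1 ≤ L s(u, v) :=
    calc L s(u, v) + 1 ≤ 1 + ⨅ w ∈ s(u, v), sSup (tautNbrLevels G taut L w s(u, v)) := by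
          rw [add_comm]; gcongr
      _ = L s(u, v) := hfix.symm
  exact (lt_irrefl _) ((ENat.add_one_le_iff hfin).mp hsucc_le)

theorem IsTautPath.level_lt_or_level_lt {n : ℕ} {p : ℕ → V} (hp : IsTautPath G taut n p)
    (taut_symm : ∀ v e f, taut v e f → taut v f e)
    (hfix : ∀ e ∈ G.edgeSet, L e = levelOp G taut L e) (hfin : ∀ e ∈ G.edgeSet, L e < ⊤)
    {i : ℕ} (hi : 1 ≤ i) (hin : i + 2 ≤ n) :
    L s(p (i - 1), p i) < L s(p i, p (i + 1)) ∨
      L s(p (i + 1), p (i + 2)) < L s(p i, p (i + 1)) := by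
  obtain ⟨-, hadj, htaut⟩ := hp
  have he : s(p i, p (i + 1)) ∈ G.edgeSet := hadj i (by omega)
  have hprev : s(p (i - 1), p i) ∈ G.edgeSet := by
    have := hadj (i - 1) (by omega)
    rwa [Nat.sub_add_cancel hi] at this
  refine lt_or_lt_of_eq_levelOp (hfix _ he) (hfin _ he).ne hprev (Sym2.mem_mk_right _ _)
    (taut_symm _ _ _ (htaut i hi (by omega))) (hadj (i + 1) (by omega)) (Sym2.mem_mk_left _ _) ?_
  simpa using htaut (i + 1) (by omega) (by omega)

end EdgeLevel

theorem taut_path_levels_unimodal_general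
    (G : SimpleGraph V)
    (taut : V → Sym2 V → Sym2 V → Prop)
    (taut_symm : ∀ v e f, taut v e f → taut v f e)
    (L : Sym2 V → ℕ∞) (hL : IsEdgeLevel G taut L)
    (hfin : ∀ e ∈ G.edgeSet, L e < ⊤)
    (n : ℕ) (p : ℕ → V) (hp : IsTautPath G taut n p)
    (ℓ : ℕ → ℕ∞) (hℓ : ∀ i, ℓ i = L s(p (i - 1), p i)) :
    ∃ k, k ≤ n ∧
      (∀ i, 1 ≤ i → i + 1 ≤ k → ℓ i < ℓ (i + 1)) ∧
      (∀ i, k + 1 ≤ i → i + 1 ≤ n → ℓ (i + 1) < ℓ i) := by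
  refine exists_strictMono_prefix_strictAnti_suffix fun i hi hin => ?_
  simpa [hℓ] using hp.level_lt_or_level_lt taut_symm hL.1 hfin hi hin

/-- If every edge of `G` has finite level, then the level sequence of any taut path
consists of a strictly increasing prefix `ℓ 1 < ⋯ < ℓ k` followed by a strictly
decreasing suffix `ℓ (k+1) > ⋯ > ℓ n`. -/
theorem taut_path_levels_unimodal
    [Fintype V] (G : SimpleGraph V)
    (taut : V → Sym2 V → Sym2 V → Prop)
    (taut_symm : ∀ v e f, taut v e f → taut v f e)
    (L : Sym2 V → ℕ∞) (hL : IsEdgeLevel G taut L)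
    (hfin : ∀ e ∈ G.edgeSet, L e < ⊤)
    (n : ℕ) (p : ℕ → V) (hp : IsTautPath G taut n p)
    (ℓ : ℕ → ℕ∞) (hℓ : ∀ i, ℓ i = L s(p (i - 1), p i)) :
    ∃ k, k ≤ n ∧
      (∀ i, 1 ≤ i → i + 1 ≤ k → ℓ i < ℓ (i + 1)) ∧
      (∀ i, k + 1 ≤ i → i + 1 ≤ n → ℓ (i + 1) < ℓ i) :=
  taut_path_levels_unimodal_general G taut taut_symm L hL hfin n p hp ℓ hℓ
end

section
/- Fix vertices s, t ∈ V, let w : E → ℝ be a positive edge-weight function, and let H ⊆ E be the set of edges that are marked from s, or marked from t, or are level-W. If some s–t walk of minimum total weight (among all s–t walks in G) is a taut path, then there exists an s–t walk of minimum total weight all of whose edges belong to H; that is, restricting the shortest-path search to the subgraph H preserves optimality. -/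
open SimpleGraph

variable {V : Type*}

/-- An edge `e` is *marked from* `s` if there is a taut path starting at `s` whose edges
all have finite level, whose successive edge levels are strictly increasing, and whose
final edge is `e`. -/
def MarkedFrom (G : SimpleGraph V) (taut : V → Sym2 V → Sym2 V → Prop)
    (L : Sym2 V → ℕ∞) (s : V) (e : Sym2 V) : Prop :=
  ∃ (m : ℕ) (p : ℕ → V), IsTautPath G taut m p ∧ p 0 = s ∧
    (∀ i, 1 ≤ i → i ≤ m → L s(p (i - 1), p i) < ⊤) ∧
    (∀ i, 1 ≤ i → i + 1 ≤ m → L s(p (i - 1), p i) < L s(p i, p (i + 1))) ∧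
    s(p (m - 1), p m) = e

/-- `p 0, p 1, …, p n` is a walk in `G`. -/
def IsWalk (G : SimpleGraph V) (n : ℕ) (p : ℕ → V) : Prop :=
  ∀ i < n, G.Adj (p i) (p (i + 1))

/-- The total weight of the walk `p 0, p 1, …, p n`: the sum of `w` over its edges
(with multiplicity). -/
noncomputable def walkWeight (w : Sym2 V → ℝ) (n : ℕ) (p : ℕ → V) : ℝ :=
  ∑ i ∈ Finset.range n, w s(p i, p (i + 1))

/-! Along a taut path, as soon as the edge level fails to increase at an edge of finite level,
the fixed-point equation for `L` forces the levels to decrease strictly from there on. So along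
the given minimum-weight taut path the levels first increase and then decrease: every edge of
finite level lies on the increasing part, read from `s`, or on the decreasing part, which read
backwards from `t` is increasing. Hence the path itself already runs inside `H`. -/

theorem iInf_mem_sym2_mk {α : Type*} [CompleteLattice α] (f : V → α) (a b : V) :
    ⨅ v ∈ s(a, b), f v = f a ⊓ f b := by
  simp only [Sym2.mem_iff, iInf_or, iInf_inf_eq, iInf_iInf_eq_left]

section LevelSequence

variable {ℓ : ℕ → ℕ∞} {n : ℕ}

theorem descent_propagates
    (hstep : ∀ k, k + 3 ≤ n → ℓ (k + 1) < ⊤ → ℓ (k + 1) ≤ ℓ k → ℓ (k + 2) < ℓ (k + 1))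
    {j : ℕ} (hj : ℓ (j + 1) ≤ ℓ j) : ∀ m, j ≤ m → m + 2 ≤ n → ℓ (m + 1) ≤ ℓ m := by
  intro m hjm
  induction m, hjm using Nat.le_induction with
  | base => exact fun _ => hj
  | succ m hjm ih =>
    intro hm
    rcases lt_or_eq_of_le (le_top : ℓ (m + 1) ≤ ⊤) with hfin | htop
    · exact (hstep m (by omega) hfin (ih (by omega))).le
    · exact htop ▸ le_top

theorem increasing_before_or_decreasing_after
    (hstep : ∀ k, k + 3 ≤ n → ℓ (k + 1) < ⊤ → ℓ (k + 1) ≤ ℓ k → ℓ (k + 2) < ℓ (k + 1))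
    {i : ℕ} (hfin : ℓ i < ⊤) :
    (∀ k < i, ℓ k < ℓ (k + 1)) ∨ ∀ k, i ≤ k → k + 2 ≤ n → ℓ (k + 1) < ℓ k := by
  refine or_iff_not_imp_left.mpr fun hinc => ?_
  push Not at hinc
  obtain ⟨j, hji, hj⟩ := hinc
  have hanti := descent_propagates hstep hj
  have hfin_after : ∀ m, i ≤ m → m < n → ℓ m < ⊤ := by
    intro m him
    induction m, him using Nat.le_induction with
    | base => exact fun _ => hfin
    | succ m him ih => exact fun hm => (hanti m (by omega) (by omega)).trans_lt (ih (by omega))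
  intro k hik hk
  obtain ⟨m, rfl⟩ : ∃ m, k = m + 1 := ⟨k - 1, by omega⟩
  exact hstep m (by omega) (hfin_after _ hik (by omega)) (hanti m (by omega) (by omega))

end LevelSequence

section TautPaths

variable {G : SimpleGraph V} {taut : V → Sym2 V → Sym2 V → Prop} {L : Sym2 V → ℕ∞}

/-- With `S_v` the sup of the levels of the taut neighbours of `bc` at `v`, we have
`L bc = 1 + min S_b S_c` and `L bc ≤ L ab ≤ S_b`, so the minimum is `S_c < S_b`. -/
theorem level_lt_of_taut_of_level_le (taut_symm : ∀ v e f, taut v e f → taut v f e)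
    (hfix : ∀ e ∈ G.edgeSet, L e = levelOp G taut L e) {a b c d : V}
    (hab : G.Adj a b) (hbc : G.Adj b c) (hcd : G.Adj c d)
    (habc : taut b s(a, b) s(b, c)) (hbcd : taut c s(b, c) s(c, d))
    (hfin : L s(b, c) < ⊤) (hle : L s(b, c) ≤ L s(a, b)) : L s(c, d) < L s(b, c) := by
  set Sb := sSup (tautNbrLevels G taut L b s(b, c))
  set Sc := sSup (tautNbrLevels G taut L c s(b, c))
  have hL : L s(b, c) = 1 + Sb ⊓ Sc := by
    rw [hfix _ hbc, levelOp, iInf_mem_sym2_mk]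
  have hab_le : L s(a, b) ≤ Sb :=
    le_sSup ⟨_, hab, Sym2.mem_mk_right a b, taut_symm _ _ _ habc, rfl⟩
  have hcd_le : L s(c, d) ≤ Sc :=
    le_sSup ⟨_, hcd, Sym2.mem_mk_left c d, hbcd, rfl⟩
  have hmin_fin : Sb ⊓ Sc ≠ ⊤ := by
    rintro h
    rw [h, add_top] at hL
    exact hfin.ne hL
  have hmin_lt : Sb ⊓ Sc < Sb := by
    rw [← ENat.add_one_le_iff hmin_fin, add_comm, ← hL]
    exact hle.trans hab_le
  have hc_lt : Sc < Sb := by simpa using hmin_lt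
  calc L s(c, d) ≤ Sb ⊓ Sc := le_inf (hcd_le.trans hc_lt.le) hcd_le
    _ < 1 + Sb ⊓ Sc := by
      rw [add_comm, ENat.lt_add_one_iff hmin_fin]
    _ = L s(b, c) := hL.symm

namespace IsTautPath

variable {n : ℕ} {p : ℕ → V}

theorem level_step (hp : IsTautPath G taut n p) (taut_symm : ∀ v e f, taut v e f → taut v f e)
    (hfix : ∀ e ∈ G.edgeSet, L e = levelOp G taut L e) (k : ℕ) (hk : k + 3 ≤ n)
    (hfin : L s(p (k + 1), p (k + 2)) < ⊤) (hle : L s(p (k + 1), p (k + 2)) ≤ L s(p k, p (k + 1))) :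
    L s(p (k + 2), p (k + 3)) < L s(p (k + 1), p (k + 2)) := by
  refine level_lt_of_taut_of_level_le taut_symm hfix (hp.2.1 k (by omega))
    (hp.2.1 (k + 1) (by omega)) (hp.2.1 (k + 2) (by omega)) (hp.2.2 (k + 1) (by omega) (by omega))
    ?_ hfin hle
  simpa using hp.2.2 (k + 2) (by omega) (by omega)

theorem of_le (hp : IsTautPath G taut n p) {m : ℕ} (hm : 1 ≤ m) (hmn : m ≤ n) :
    IsTautPath G taut m p :=
  ⟨hm, fun i hi => hp.2.1 i (by omega), fun i hi1 hi2 => hp.2.2 i hi1 (by omega)⟩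

theorem reverse (hp : IsTautPath G taut n p) (taut_symm : ∀ v e f, taut v e f → taut v f e) :
    IsTautPath G taut n (fun k => p (n - k)) := by
  refine ⟨hp.1, fun i hi => ?_, fun i hi1 hi2 => ?_⟩
  · have h := hp.2.1 (n - (i + 1)) (by omega)
    rw [show n - (i + 1) + 1 = n - i by omega] at h
    exact h.symm
  · have h := taut_symm _ _ _ (hp.2.2 (n - i) (by omega) (by omega))
    rw [show n - i - 1 = n - (i + 1) by omega, show n - i + 1 = n - (i - 1) by omega] at h
    simpa only [Sym2.eq_swap] using h

theorem markedFrom (hp : IsTautPath G taut n p)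
    (hinc : ∀ k, k + 1 < n → L s(p k, p (k + 1)) < L s(p (k + 1), p (k + 2)))
    (hlast : L s(p (n - 1), p n) < ⊤) : MarkedFrom G taut L (p 0) s(p (n - 1), p n) := by
  refine ⟨n, p, hp, rfl, fun i hi1 hi2 => ?_, fun i hi1 hi2 => ?_, rfl⟩
  · rcases Nat.lt_or_eq_of_le hi2 with hi | rfl
    · obtain ⟨k, rfl⟩ : ∃ k, i = k + 1 := ⟨i - 1, by omega⟩
      exact lt_top_of_lt (hinc k hi)
    · exact hlast
  · obtain ⟨k, rfl⟩ : ∃ k, i = k + 1 := ⟨i - 1, by omega⟩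
    exact hinc k (by omega)

theorem markedFrom_start (hp : IsTautPath G taut n p) {i : ℕ} (hi : i < n)
    (hfin : L s(p i, p (i + 1)) < ⊤)
    (hinc : ∀ k < i, L s(p k, p (k + 1)) < L s(p (k + 1), p (k + 2))) :
    MarkedFrom G taut L (p 0) s(p i, p (i + 1)) :=
  (hp.of_le (m := i + 1) (by omega) hi).markedFrom (fun k hk => hinc k (by omega)) hfin

theorem markedFrom_end (hp : IsTautPath G taut n p)
    (taut_symm : ∀ v e f, taut v e f → taut v f e) {i : ℕ} (hi : i < n)
    (hfin : L s(p i, p (i + 1)) < ⊤)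
    (hdec : ∀ k, i ≤ k → k + 2 ≤ n → L s(p (k + 1), p (k + 2)) < L s(p k, p (k + 1))) :
    MarkedFrom G taut L (p n) s(p i, p (i + 1)) := by
  have h := ((hp.reverse taut_symm).of_le (m := n - i) (by omega) (by omega)).markedFrom
    (L := L) ?_ ?_
  · simpa [show n - (n - i - 1) = i + 1 by omega, show n - (n - i) = i by omega, Sym2.eq_swap]
      using h
  · intro k hk
    have h := hdec (n - (k + 2)) (by omega) (by omega)
    rw [show n - (k + 2) + 1 = n - (k + 1) by omega, show n - (k + 2) + 2 = n - k by omega] at h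
    simpa only [Sym2.eq_swap] using h
  · simpa [show n - (n - i - 1) = i + 1 by omega, show n - (n - i) = i by omega, Sym2.eq_swap]
      using hfin

end IsTautPath

end TautPaths

theorem exists_min_weight_walk_in_marked_subgraph_general
    (G : SimpleGraph V)
    (taut : V → Sym2 V → Sym2 V → Prop)
    (taut_symm : ∀ v e f, taut v e f → taut v f e)
    (L : Sym2 V → ℕ∞) (hL : IsEdgeLevel G taut L)
    (s t : V) (w : Sym2 V → ℝ)
    (H : Set (Sym2 V))
    (hH : H = {e | MarkedFrom G taut L s e ∨ MarkedFrom G taut L t e ∨ L e = ⊤})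
    (n : ℕ) (p : ℕ → V) (hwalk : IsWalk G n p) (hps : p 0 = s) (hpt : p n = t)
    (hmin : ∀ (m : ℕ) (q : ℕ → V), IsWalk G m q → q 0 = s → q m = t →
      walkWeight w n p ≤ walkWeight w m q)
    (htaut : IsTautPath G taut n p) :
    ∃ (m : ℕ) (q : ℕ → V), IsWalk G m q ∧ q 0 = s ∧ q m = t ∧
      (∀ (m' : ℕ) (q' : ℕ → V), IsWalk G m' q' → q' 0 = s → q' m' = t →
        walkWeight w m q ≤ walkWeight w m' q') ∧
      ∀ i < m, s(q i, q (i + 1)) ∈ H := by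
  refine ⟨n, p, hwalk, hps, hpt, hmin, fun i hi => ?_⟩
  subst hH hps hpt
  rcases lt_or_eq_of_le (le_top : L s(p i, p (i + 1)) ≤ ⊤) with hfin | htop
  · rcases increasing_before_or_decreasing_after (ℓ := fun k => L s(p k, p (k + 1)))
      (htaut.level_step taut_symm hL.1) hfin with hinc | hdec
    · exact Or.inl (htaut.markedFrom_start hi hfin hinc)
    · exact Or.inr (Or.inl (htaut.markedFrom_end taut_symm hi hfin hdec))
  · exact Or.inr (Or.inr htop)

/-- Let `w` be a positive edge-weight function and `H` the set of edges marked from `s`,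
marked from `t`, or level-W. If some `s`–`t` walk of minimum total weight is a taut path,
then there is an `s`–`t` walk of minimum total weight all of whose edges belong to `H`. -/
theorem exists_min_weight_walk_in_marked_subgraph
    [Fintype V] (G : SimpleGraph V)
    (taut : V → Sym2 V → Sym2 V → Prop)
    (taut_symm : ∀ v e f, taut v e f → taut v f e)
    (L : Sym2 V → ℕ∞) (hL : IsEdgeLevel G taut L)
    (s t : V) (w : Sym2 V → ℝ) (hw : ∀ e ∈ G.edgeSet, 0 < w e)
    (H : Set (Sym2 V))
    (hH : H = {e | MarkedFrom G taut L s e ∨ MarkedFrom G taut L t e ∨ L e = ⊤})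
    (n : ℕ) (p : ℕ → V) (hwalk : IsWalk G n p) (hps : p 0 = s) (hpt : p n = t)
    (hmin : ∀ (m : ℕ) (q : ℕ → V), IsWalk G m q → q 0 = s → q m = t →
      walkWeight w n p ≤ walkWeight w m q)
    (htaut : IsTautPath G taut n p) :
    ∃ (m : ℕ) (q : ℕ → V), IsWalk G m q ∧ q 0 = s ∧ q m = t ∧
      (∀ (m' : ℕ) (q' : ℕ → V), IsWalk G m' q' → q' 0 = s → q' m' = t →
        walkWeight w m q ≤ walkWeight w m' q') ∧
      ∀ i < m, s(q i, q (i + 1)) ∈ H :=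
  exists_min_weight_walk_in_marked_subgraph_general G taut taut_symm L hL s t w H hH n p hwalk hps
    hpt hmin htaut
end
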